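/- arXiv:0905.3148 — 6 statements merged into one kernel-verified Lean document; each statement's English description precedes it below -/
import Mathlib

section
/- Let 𝒯 be a pretriangulated category and let (A_•, d_•) be a complex of length n over 𝒯 such that Hom(A_i, A_j⟦m⟧) = 0 for all 0 ≤ i < j ≤ n and all integers m < 0. Then there exists a right convolution (X, r) of (A_•, d_•). -/
open CategoryTheory CategoryTheory.Limits CategoryTheory.Pretriangulated

universe v u

variable (C : Type u) [Category.{v} C] [Preadditive C] [HasZeroObject C] [HasShift C ℤ]
  [∀ n : ℤ, (shiftFunctor C n).Additive] [Pretriangulated C]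

/-- A complex of length `n` over a pretriangulated category: objects `A 0, …, A n` and
morphisms `d i : A i ⟶ A (i+1)` with `d i ≫ d (i+1) = 0` (the values of `A` and `d` beyond
`n` are irrelevant junk). -/
structure ComplexOver (n : ℕ) where
  /-- the objects of the complex -/
  A : ℕ → C
  /-- the differentials of the complex -/
  d : ∀ i : ℕ, A i ⟶ A (i + 1)
  comp_zero : ∀ i : ℕ, i + 2 ≤ n → d i ≫ d (i + 1) = 0

variable {C}

/-- The data exhibiting `(X, r)` as a right convolution of a complex `(A, d)` of length `n`:
a Postnikov system `B 0 = A 0, B 1, …, B n = X` with morphisms `u i : B i ⟶ A (i+1)`,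
`v i : A i ⟶ B i` (with `v 0 = id` and `v n = r`) and `w i : B (i+1) ⟶ (B i)⟦1⟧` such that
`v i ≫ u i = d i` and each `B i ⟶ A (i+1) ⟶ B (i+1) ⟶ (B i)⟦1⟧` is a distinguished
triangle. -/
structure RightConvolutionData {n : ℕ} (K : ComplexOver C n) (X : C) (r : K.A n ⟶ X) where
  /-- the objects of the Postnikov system -/
  B : ℕ → C
  hB0 : B 0 = K.A 0
  hBn : B n = X
  /-- the morphisms `B i ⟶ A (i+1)` -/
  u : ∀ i : ℕ, B i ⟶ K.A (i + 1)
  /-- the morphisms `A i ⟶ B i` -/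
  v : ∀ i : ℕ, K.A i ⟶ B i
  /-- the morphisms `B (i+1) ⟶ (B i)⟦1⟧` -/
  w : ∀ i : ℕ, B (i + 1) ⟶ (B i)⟦(1 : ℤ)⟧
  hv0 : v 0 = eqToHom hB0.symm
  hvn : v n = r ≫ eqToHom hBn.symm
  comm : ∀ i : ℕ, i + 1 ≤ n → v i ≫ u i = K.d i
  mem : ∀ i : ℕ, i + 1 ≤ n → Triangle.mk (u i) (v (i + 1)) (w i) ∈ distTriang C

/-!
Build the Postnikov system inductively: `B 0 = A 0`, and `B (k+1)` is a cone of a map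
`u k : B k ⟶ A (k+1)` lifting `d k` along `v k`. The invariant `Hom(B k, A j⟦m⟧) = 0` for
`k < j` and `m < 0` holds for `k = 0` by hypothesis and passes to cones. It is exactly what
makes the lift exist: `v k ≫ (u k ≫ d (k+1)) = d k ≫ d (k+1) = 0`, so `u k ≫ d (k+1)`
factors through `B k ⟶ (B (k-1))⟦1⟧` and vanishes since `Hom(B (k-1), A (k+2)⟦-1⟧) = 0`;
then `d (k+1)` factors through the cone map `v (k+1)`.
-/

section Shift

variable {D : Type*} [Category D] [HasZeroMorphisms D] [HasShift D ℤ]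

def HasNoNegExt (X Y : D) : Prop :=
  ∀ m : ℤ, m < 0 → ∀ f : X ⟶ Y⟦m⟧, f = 0

namespace HasNoNegExt

variable {X Y : D}

lemma shift (h : HasNoNegExt X Y) {m : ℤ} (hm : m ≤ 0) : HasNoNegExt X (Y⟦m⟧) := by
  intro m' hm' f
  rw [← cancel_mono ((shiftFunctorAdd' D m m' (m + m') rfl).inv.app Y), zero_comp]
  exact h _ (by omega) _

lemma shift_one_hom_eq_zero (h : HasNoNegExt X Y) (g : X⟦(1 : ℤ)⟧ ⟶ Y) : g = 0 :=
  ((shiftEquiv D (1 : ℤ)).toAdjunction.homEquiv X Y).injective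
    ((h (-1) (by norm_num) _).trans (h (-1) (by norm_num) _).symm)

end HasNoNegExt

end Shift

namespace HasNoNegExt

variable {Y : C}

lemma eq_zero_of_mor₂_comp {T : Triangle C} (hT : T ∈ distTriang C)
    (h : HasNoNegExt T.obj₁ Y) {f : T.obj₃ ⟶ Y} (hf : T.mor₂ ≫ f = 0) : f = 0 := by
  obtain ⟨g, rfl⟩ := Triangle.yoneda_exact₃ T hT f hf
  rw [h.shift_one_hom_eq_zero g, comp_zero]

lemma of_distinguished {T : Triangle C} (hT : T ∈ distTriang C)
    (h₁ : HasNoNegExt T.obj₁ Y) (h₂ : HasNoNegExt T.obj₂ Y) : HasNoNegExt T.obj₃ Y :=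
  fun m hm _ => (h₁.shift hm.le).eq_zero_of_mor₂_comp hT (h₂ m hm _)

end HasNoNegExt

namespace ComplexOver

variable {n : ℕ} (K : ComplexOver C n)

-- When `d k` does not factor through `v k`, `Classical.epsilon` picks a junk `u k`; under the
-- vanishing hypothesis this does not happen for `k < n`.
noncomputable def tower : (k : ℕ) → Σ B : C, K.A k ⟶ B
  | 0 => ⟨K.A 0, 𝟙 _⟩
  | k + 1 =>
    let u : (tower k).1 ⟶ K.A (k + 1) := Classical.epsilon fun u => (tower k).2 ≫ u = K.d k
    ⟨_, (distinguished_cocone_triangle u).choose_spec.choose⟩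

noncomputable def towerB (k : ℕ) : C := (K.tower k).1

noncomputable def towerV (k : ℕ) : K.A k ⟶ K.towerB k := (K.tower k).2

noncomputable def towerU (k : ℕ) : K.towerB k ⟶ K.A (k + 1) :=
  Classical.epsilon fun u => K.towerV k ≫ u = K.d k

noncomputable def towerW (k : ℕ) : K.towerB (k + 1) ⟶ (K.towerB k)⟦(1 : ℤ)⟧ :=
  (distinguished_cocone_triangle (K.towerU k)).choose_spec.choose_spec.choose

lemma towerTriangle_distinguished (k : ℕ) :
    Triangle.mk (K.towerU k) (K.towerV (k + 1)) (K.towerW k) ∈ distTriang C :=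
  (distinguished_cocone_triangle (K.towerU k)).choose_spec.choose_spec.choose_spec

variable {K}

lemma towerV_comp_towerU_of_exists {k : ℕ} (h : ∃ u, K.towerV k ≫ u = K.d k) :
    K.towerV k ≫ K.towerU k = K.d k :=
  Classical.epsilon_spec h

lemma towerB_hasNoNegExt
    (hvanish : ∀ i j : ℕ, i < j → j ≤ n → HasNoNegExt (K.A i) (K.A j)) (k : ℕ) :
    ∀ j, k < j → j ≤ n → HasNoNegExt (K.towerB k) (K.A j) := by
  induction k with
  | zero => exact hvanish 0
  | succ k ih =>
    intro j hkj hjn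
    exact HasNoNegExt.of_distinguished (K.towerTriangle_distinguished k)
      (ih j (by omega) hjn) (hvanish (k + 1) j hkj hjn)

lemma towerU_comp_d
    (hvanish : ∀ i j : ℕ, i < j → j ≤ n → HasNoNegExt (K.A i) (K.A j)) (k : ℕ)
    (hk : k + 2 ≤ n) (hcomm : K.towerV k ≫ K.towerU k = K.d k) :
    K.towerU k ≫ K.d (k + 1) = 0 := by
  have hv : K.towerV k ≫ K.towerU k ≫ K.d (k + 1) = 0 := by
    rw [← Category.assoc, hcomm, K.comp_zero k hk]
  cases k with
  | zero => exact (Category.id_comp _).symm.trans hv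
  | succ k =>
    exact (towerB_hasNoNegExt hvanish k (k + 3) (by omega) hk).eq_zero_of_mor₂_comp
      (K.towerTriangle_distinguished k) hv

lemma towerV_comp_towerU
    (hvanish : ∀ i j : ℕ, i < j → j ≤ n → HasNoNegExt (K.A i) (K.A j)) (k : ℕ)
    (hk : k + 1 ≤ n) : K.towerV k ≫ K.towerU k = K.d k := by
  induction k with
  | zero => exact towerV_comp_towerU_of_exists ⟨K.d 0, Category.id_comp _⟩
  | succ k ih =>
    obtain ⟨g, hg⟩ := Triangle.yoneda_exact₂ _ (K.towerTriangle_distinguished k) (K.d (k + 1))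
      (towerU_comp_d hvanish k hk (ih (by omega)))
    exact towerV_comp_towerU_of_exists ⟨g, hg.symm⟩

noncomputable def towerConvolution
    (hvanish : ∀ i j : ℕ, i < j → j ≤ n → HasNoNegExt (K.A i) (K.A j)) :
    RightConvolutionData K (K.towerB n) (K.towerV n) where
  B := K.towerB
  hB0 := rfl
  hBn := rfl
  u := K.towerU
  v := K.towerV
  w := K.towerW
  hv0 := rfl
  hvn := by simp
  comm k hk := towerV_comp_towerU hvanish k hk
  mem k _ := K.towerTriangle_distinguished k

end ComplexOver

/-- Orlov's convolution existence lemma: if `(A, d)` is a complex of length `n` over a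
pretriangulated category with `Hom(A i, A j⟦m⟧) = 0` for all `i < j ≤ n` and `m < 0`, then
a right convolution of `(A, d)` exists. -/
theorem exists_rightConvolution {n : ℕ} (K : ComplexOver C n)
    (hvanish : ∀ i j : ℕ, i < j → j ≤ n → ∀ m : ℤ, m < 0 →
      ∀ f : K.A i ⟶ (K.A j)⟦m⟧, f = 0) :
    ∃ (X : C) (r : K.A n ⟶ X), Nonempty (RightConvolutionData K X r) :=
  ⟨_, _, ⟨K.towerConvolution hvanish⟩⟩
end

section
/- Let 𝒯 be a pretriangulated category and let (A_•, d_•) and (A'_•, d'_•) be complexes of length n over 𝒯 such that Hom(A_i, A_j⟦m⟧) = 0, Hom(A'_i, A'_j⟦m⟧) = 0, and Hom(A_i, A'_j⟦m⟧) = 0 for all 0 ≤ i < j ≤ n and all integers m < 0. Let (f_i : A_i → A'_i)_{0≤i≤n} be a morphism of complexes, i.e. f_{i+1} ∘ d_i = d'_i ∘ f_i for 0 ≤ i ≤ n−1. Then for any right convolution (X, r) of (A_•, d_•), any right convolution (X', r') of (A'_•, d'_•), any object Z' of 𝒯, and any morphism h : X' → Z', there exists a morphism g : X → Z' with g ∘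 r = h ∘ r' ∘ f_n. If moreover Hom(A_i, Z'⟦m⟧) = 0 for all 0 ≤ i ≤ n and all m < 0, then g is the unique morphism X → Z' satisfying g ∘ r = h ∘ r' ∘ f_n. -/
open CategoryTheory CategoryTheory.Limits CategoryTheory.Pretriangulated

universe v u

variable (C : Type u) [Category.{v} C] [Preadditive C] [HasZeroObject C] [HasShift C ℤ]
  [∀ n : ℤ, (shiftFunctor C n).Additive] [Pretriangulated C]

variable {C}

/-!
The comparison maps `β i : B i ⟶ B' i` with `v i ≫ β i = f i ≫ v' i` are built inductively by
completing morphisms of distinguished triangles `B i → A (i+1) → B (i+1) → (B i)⟦1⟧`. To do so one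
needs the square `β i ≫ u' i = u i ≫ f (i+1)`, and this is where the Hom-vanishing enters: a
morphism out of `B i` is determined by its composite with `v i` as soon as the `A j`, `j < i`, have
no negative Homs into the target, because then neither has `B (i-1)` (induction along the tower,
using the long exact Hom sequence), and a map killed by `v i` factors through `(B (i-1))⟦1⟧`.
Applied to the target `Z'`, the same principle gives uniqueness.
-/

namespace CategoryTheory.Pretriangulated

def NegativeHomsVanish (A Y : C) : Prop :=
  ∀ m : ℤ, m < 0 → ∀ φ : A ⟶ Y⟦m⟧, φ = 0

lemma eq_zero_of_mor₂_comp_eq_zero {T : Triangle C} (hT : T ∈ distTriang C) {Y : C}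
    (hT₁ : ∀ ψ : T.obj₁ ⟶ Y⟦(-1 : ℤ)⟧, ψ = 0) (φ : T.obj₃ ⟶ Y) (hφ : T.mor₂ ≫ φ = 0) :
    φ = 0 := by
  obtain ⟨γ, rfl⟩ := Triangle.yoneda_exact₃ T hT φ hφ
  have hγ : γ = 0 := by
    let e := (shiftFunctorCompIsoId C (-1 : ℤ) 1 (by norm_num)).app Y
    obtain ⟨ψ, hψ⟩ := (shiftFunctor C (1 : ℤ)).map_surjective (γ ≫ e.inv)
    rw [← cancel_mono e.inv, ← hψ, hT₁ ψ, Functor.map_zero, zero_comp]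
  rw [hγ, comp_zero]

lemma NegativeHomsVanish.obj₃ {T : Triangle C} (hT : T ∈ distTriang C) {Y : C}
    (h₁ : NegativeHomsVanish T.obj₁ Y) (h₂ : NegativeHomsVanish T.obj₂ Y) :
    NegativeHomsVanish T.obj₃ Y := by
  intro m hm φ
  refine eq_zero_of_mor₂_comp_eq_zero hT (fun ψ => ?_) φ (h₂ m hm _)
  let e := (shiftFunctorAdd' C m (-1) (m - 1) (by ring)).app Y
  rw [← cancel_mono e.inv, zero_comp]
  exact h₁ (m - 1) (by omega) _

end CategoryTheory.Pretriangulated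

namespace RightConvolutionData

variable {n : ℕ} {K : ComplexOver C n} {X : C} {r : K.A n ⟶ X}

lemma negativeHomsVanish_B (D : RightConvolutionData K X r) {Y : C} {i : ℕ} (hi : i ≤ n)
    (hY : ∀ j ≤ i, NegativeHomsVanish (K.A j) Y) : NegativeHomsVanish (D.B i) Y := by
  induction i with
  | zero => exact D.hB0 ▸ hY 0 le_rfl
  | succ i ih =>
    exact NegativeHomsVanish.obj₃ (D.mem i hi)
      (ih (by omega) fun j hj => hY j (by omega)) (hY (i + 1) le_rfl)

lemma hom_ext (D : RightConvolutionData K X r) {Y : C} {i : ℕ} (hi : i ≤ n)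
    (hY : ∀ j < i, NegativeHomsVanish (K.A j) Y) {φ φ' : D.B i ⟶ Y}
    (h : D.v i ≫ φ = D.v i ≫ φ') : φ = φ' := by
  cases i with
  | zero => rwa [D.hv0, cancel_epi] at h
  | succ i =>
    rw [← sub_eq_zero]
    refine eq_zero_of_mor₂_comp_eq_zero (D.mem i hi) (fun ψ => ?_) _
      (show D.v (i + 1) ≫ (φ - φ') = 0 by rw [Preadditive.comp_sub, h, sub_self])
    exact D.negativeHomsVanish_B (by omega) (fun j hj => hY j (by omega)) (-1) (by norm_num) ψ

lemma hom_ext_top (D : RightConvolutionData K X r) {Y : C}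
    (hY : ∀ j < n, NegativeHomsVanish (K.A j) Y) {φ φ' : X ⟶ Y} (h : r ≫ φ = r ≫ φ') :
    φ = φ' := by
  have := D.hom_ext le_rfl hY (φ := eqToHom D.hBn ≫ φ) (φ' := eqToHom D.hBn ≫ φ')
    (by simpa [D.hvn] using h)
  rwa [cancel_epi] at this

variable {K' : ComplexOver C n} {X' : C} {r' : K'.A n ⟶ X'}

lemma exists_hom_B_comp_eq (D : RightConvolutionData K X r)
    (D' : RightConvolutionData K' X' r')
    (hKK' : ∀ i j : ℕ, i < j → j ≤ n → NegativeHomsVanish (K.A i) (K'.A j))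
    (f : ∀ i : ℕ, K.A i ⟶ K'.A i) (hf : ∀ i : ℕ, i + 1 ≤ n → K.d i ≫ f (i + 1) = f i ≫ K'.d i)
    (i : ℕ) (hi : i ≤ n) : ∃ β : D.B i ⟶ D'.B i, D.v i ≫ β = f i ≫ D'.v i := by
  induction i with
  | zero => exact ⟨eqToHom D.hB0 ≫ f 0 ≫ eqToHom D'.hB0.symm, by simp [D.hv0, D'.hv0]⟩
  | succ i ih =>
    obtain ⟨β, hβ⟩ := ih (by omega)
    have hsq : D.u i ≫ f (i + 1) = β ≫ D'.u i :=
      D.hom_ext (by omega) (fun j hj => hKK' j (i + 1) (by omega) hi) <| by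
        rw [reassoc_of% hβ, D'.comm i hi, reassoc_of% D.comm i hi, hf i hi]
    obtain ⟨c, hc, -⟩ := complete_distinguished_triangle_morphism _ _ (D.mem i hi)
      (D'.mem i hi) β (f (i + 1)) hsq
    exact ⟨c, hc⟩

lemma exists_hom_comp_eq (D : RightConvolutionData K X r) (D' : RightConvolutionData K' X' r')
    (hKK' : ∀ i j : ℕ, i < j → j ≤ n → NegativeHomsVanish (K.A i) (K'.A j))
    (f : ∀ i : ℕ, K.A i ⟶ K'.A i) (hf : ∀ i : ℕ, i + 1 ≤ n → K.d i ≫ f (i + 1) = f i ≫ K'.d i) :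
    ∃ g : X ⟶ X', r ≫ g = f n ≫ r' := by
  obtain ⟨β, hβ⟩ := D.exists_hom_B_comp_eq D' hKK' f hf n le_rfl
  refine ⟨eqToHom D.hBn.symm ≫ β ≫ eqToHom D'.hBn, ?_⟩
  simpa [D.hvn, D'.hvn] using hβ =≫ eqToHom D'.hBn

end RightConvolutionData

theorem exists_hom_of_rightConvolutions_general {n : ℕ} (K K' : ComplexOver C n)
    (hKK' : ∀ i j : ℕ, i < j → j ≤ n → ∀ m : ℤ, m < 0 → ∀ f : K.A i ⟶ (K'.A j)⟦m⟧, f = 0)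
    (f : ∀ i : ℕ, K.A i ⟶ K'.A i)
    (hf : ∀ i : ℕ, i + 1 ≤ n → K.d i ≫ f (i + 1) = f i ≫ K'.d i)
    (X : C) (r : K.A n ⟶ X) (hX : Nonempty (RightConvolutionData K X r))
    (X' : C) (r' : K'.A n ⟶ X') (hX' : Nonempty (RightConvolutionData K' X' r'))
    (Z' : C) (h : X' ⟶ Z') :
    ∃ g : X ⟶ Z', r ≫ g = f n ≫ r' ≫ h ∧
      ((∀ i : ℕ, i ≤ n → ∀ m : ℤ, m < 0 → ∀ φ : K.A i ⟶ Z'⟦m⟧, φ = 0) →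
        ∀ g' : X ⟶ Z', r ≫ g' = f n ≫ r' ≫ h → g' = g) := by
  obtain ⟨D⟩ := hX
  obtain ⟨D'⟩ := hX'
  obtain ⟨g, hg⟩ := D.exists_hom_comp_eq D' hKK' f hf
  refine ⟨g ≫ h, by rw [reassoc_of% hg], fun hZ g' hg' => ?_⟩
  exact D.hom_ext_top (fun j hj => hZ j hj.le) (by rw [hg', reassoc_of% hg])

/-- Orlov's lemma on morphisms of right convolutions: given complexes `(A, d)` and `(A', d')`
of length `n` with the appropriate negative-degree Hom-vanishing, a morphism of complexes
`(f i)`, right convolutions `(X, r)` and `(X', r')`, and a morphism `h : X' ⟶ Z'`, there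
exists `g : X ⟶ Z'` with `g ∘ r = h ∘ r' ∘ f n`; moreover `g` is unique with this property
whenever `Hom(A i, Z'⟦m⟧) = 0` for all `i ≤ n` and `m < 0`. -/
theorem exists_hom_of_rightConvolutions {n : ℕ} (K K' : ComplexOver C n)
    (hK : ∀ i j : ℕ, i < j → j ≤ n → ∀ m : ℤ, m < 0 → ∀ f : K.A i ⟶ (K.A j)⟦m⟧, f = 0)
    (hK' : ∀ i j : ℕ, i < j → j ≤ n → ∀ m : ℤ, m < 0 → ∀ f : K'.A i ⟶ (K'.A j)⟦m⟧, f = 0)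
    (hKK' : ∀ i j : ℕ, i < j → j ≤ n → ∀ m : ℤ, m < 0 → ∀ f : K.A i ⟶ (K'.A j)⟦m⟧, f = 0)
    (f : ∀ i : ℕ, K.A i ⟶ K'.A i)
    (hf : ∀ i : ℕ, i + 1 ≤ n → K.d i ≫ f (i + 1) = f i ≫ K'.d i)
    (X : C) (r : K.A n ⟶ X) (hX : Nonempty (RightConvolutionData K X r))
    (X' : C) (r' : K'.A n ⟶ X') (hX' : Nonempty (RightConvolutionData K' X' r'))
    (Z' : C) (h : X' ⟶ Z') :
    ∃ g : X ⟶ Z', r ≫ g = f n ≫ r' ≫ h ∧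
      ((∀ i : ℕ, i ≤ n → ∀ m : ℤ, m < 0 → ∀ φ : K.A i ⟶ Z'⟦m⟧, φ = 0) →
        ∀ g' : X ⟶ Z', r ≫ g' = f n ≫ r' ≫ h → g' = g) :=
  exists_hom_of_rightConvolutions_general K K' hKK' f hf X r hX X' r' hX' Z' h
end

section
/- Let 𝒯 be a pretriangulated category and let (A_•, d_•) be a complex of length n over 𝒯 such that Hom(A_i, A_j⟦m⟧) = 0 for all 0 ≤ i < j ≤ n and all integers m < 0. Then any two right convolutions (X, r) and (X', r') of (A_•, d_•) are isomorphic; more precisely, there is an isomorphism g : X ≅ X' with g ∘ r = r'. If moreover Hom(A_i, X⟦m⟧) = 0 for all 0 ≤ i ≤ n and all m < 0 for some (equivalently, any) right convolution X, then this isomorphism is unique, so any two right convolutions are canonically isomorphic. -/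
open CategoryTheory CategoryTheory.Limits CategoryTheory.Pretriangulated

universe v u

variable (C : Type u) [Category.{v} C] [Preadditive C] [HasZeroObject C] [HasShift C ℤ]
  [∀ n : ℤ, (shiftFunctor C n).Additive] [Pretriangulated C]

variable {C}

/-! Induction along the Postnikov systems. If `Hom(A i, Y⟦m⟧) = 0` for `i ≤ k` and `m < 0`, then
the same holds for `B k`, by the long exact sequences of the triangles. Hence a map `f` out of
`B (k+1)` with `v (k+1) ≫ f = 0`, which factors through `B k⟦1⟧`, vanishes when its target is
`A (k+2)` or `X`. Applied to the target `A (k+2)`, this makes an isomorphism `B k ≅ B' k` compatible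
with the `v`s also compatible with the `u`s, so TR3 and the five lemma extend it to
`B (k+1) ≅ B' (k+1)`; applied to the target `X`, it shows that an endomorphism `f` of `X` with
`r ≫ f = 0` vanishes, which gives uniqueness. -/

def NegHomVanish (P Q : C) : Prop :=
  ∀ m : ℤ, m < 0 → ∀ f : P ⟶ Q⟦m⟧, f = 0

omit [HasZeroObject C] [Pretriangulated C] in
lemma eq_zero_of_shift_one_hom {P Q : C} (h : ∀ f : P ⟶ Q⟦(-1 : ℤ)⟧, f = 0)
    (g : P⟦(1 : ℤ)⟧ ⟶ Q) : g = 0 := by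
  rw [← Preadditive.IsIso.comp_right_eq_zero g
    ((shiftFunctorCompIsoId C (-1 : ℤ) 1 (by norm_num)).inv.app Q),
    ← (shiftFunctor C (1 : ℤ)).map_preimage (g ≫ _), h (Functor.preimage _ _), Functor.map_zero]

lemma eq_zero_of_mor₂_comp_eq_zero {T : Triangle C} (hT : T ∈ distTriang C) {Y : C}
    (hY : ∀ g : T.obj₁ ⟶ Y⟦(-1 : ℤ)⟧, g = 0) {f : T.obj₃ ⟶ Y} (hf : T.mor₂ ≫ f = 0) :
    f = 0 := by
  obtain ⟨t, rfl⟩ := Triangle.yoneda_exact₃ T hT f hf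
  rw [eq_zero_of_shift_one_hom hY t, comp_zero]

lemma negHomVanish_obj₃ {T : Triangle C} (hT : T ∈ distTriang C) {Y : C}
    (h₁ : NegHomVanish T.obj₁ Y) (h₂ : NegHomVanish T.obj₂ Y) : NegHomVanish T.obj₃ Y := by
  intro m hm f
  refine eq_zero_of_mor₂_comp_eq_zero hT (fun g => ?_) (h₂ m hm _)
  exact (Preadditive.IsIso.comp_right_eq_zero _
    ((shiftFunctorAdd' C m (-1) (m - 1) (by omega)).inv.app Y)).1 (h₁ (m - 1) (by omega) _)

namespace RightConvolutionData

variable {n : ℕ} {K : ComplexOver C n} {X : C} {r : K.A n ⟶ X}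
  (D : RightConvolutionData K X r)
include D

lemma v_comp_eqToHom : D.v n ≫ eqToHom D.hBn = r := by
  simp [D.hvn]

instance isIso_v_zero : IsIso (D.v 0) := by
  rw [D.hv0]
  infer_instance

lemma negHomVanish_B {Y : C} :
    ∀ k ≤ n, (∀ i ≤ k, NegHomVanish (K.A i) Y) → NegHomVanish (D.B k) Y
  | 0, _, h => by
    rw [D.hB0]
    exact h 0 le_rfl
  | k + 1, hk, h =>
    negHomVanish_obj₃ (D.mem k hk) (negHomVanish_B k (by omega) fun i hi => h i (by omega))
      (h (k + 1) le_rfl)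

lemma eq_zero_of_v_comp_eq_zero {k : ℕ} (hk : k ≤ n) {Y : C}
    (hY : ∀ i < k, NegHomVanish (K.A i) Y) {f : D.B k ⟶ Y} (hf : D.v k ≫ f = 0) : f = 0 := by
  cases k with
  | zero => exact (Preadditive.IsIso.comp_left_eq_zero _ _).1 hf
  | succ k =>
    refine eq_zero_of_mor₂_comp_eq_zero (D.mem k hk) ?_ hf
    exact D.negHomVanish_B k (by omega) (fun i hi => hY i (by omega)) (-1) (by omega)

lemma eq_zero_of_comp_eq_zero {Y : C} (hY : ∀ i ≤ n, NegHomVanish (K.A i) Y) {f : X ⟶ Y}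
    (hf : r ≫ f = 0) : f = 0 := by
  have : eqToHom D.hBn ≫ f = 0 :=
    D.eq_zero_of_v_comp_eq_zero le_rfl (fun i hi => hY i hi.le)
      (by rw [← Category.assoc, D.v_comp_eqToHom, hf])
  simpa using this

variable (hK : ∀ i j : ℕ, i < j → j ≤ n → NegHomVanish (K.A i) (K.A j))
  {X' : C} {r' : K.A n ⟶ X'} (D' : RightConvolutionData K X' r')
include hK

lemma comp_u_eq {k : ℕ} (hk : k + 1 ≤ n) {g : D.B k ⟶ D'.B k} (hg : D.v k ≫ g = D'.v k) :
    g ≫ D'.u k = D.u k := by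
  symm
  rw [← sub_eq_zero]
  refine D.eq_zero_of_v_comp_eq_zero (by omega) (fun i hi => hK i (k + 1) (by omega) hk) ?_
  rw [Preadditive.comp_sub, D.comm k hk, reassoc_of% hg, D'.comm k hk, sub_self]

lemma exists_iso_B : ∀ k ≤ n, ∃ e : D.B k ≅ D'.B k, D.v k ≫ e.hom = D'.v k
  | 0, _ => ⟨eqToIso (D.hB0.trans D'.hB0.symm), by simp [D.hv0, D'.hv0]⟩
  | k + 1, hk => by
    obtain ⟨e, he⟩ := exists_iso_B k (by omega)
    obtain ⟨e', -, he'₂⟩ := exists_iso_of_arrow_iso _ _ (D.mem k hk) (D'.mem k hk)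
      (Arrow.isoMk e (Iso.refl _) ((D.comp_u_eq hK D' hk he).trans (Category.comp_id _).symm))
    refine ⟨Triangle.π₃.mapIso e', e'.hom.comm₂.trans ?_⟩
    rw [he'₂]
    exact Category.id_comp _

end RightConvolutionData

/-- Uniqueness of right convolutions: if `(A, d)` is a complex of length `n` over a
pretriangulated category with `Hom(A i, A j⟦m⟧) = 0` for `i < j ≤ n`, `m < 0`, then any two
right convolutions `(X, r)` and `(X', r')` are isomorphic via an isomorphism `g` with
`g ∘ r = r'`; moreover this isomorphism is unique (canonical) whenever
`Hom(A i, X⟦m⟧) = 0` for all `i ≤ n` and `m < 0`. -/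
theorem rightConvolution_unique {n : ℕ} (K : ComplexOver C n)
    (hvanish : ∀ i j : ℕ, i < j → j ≤ n → ∀ m : ℤ, m < 0 →
      ∀ f : K.A i ⟶ (K.A j)⟦m⟧, f = 0)
    (X : C) (r : K.A n ⟶ X) (hX : Nonempty (RightConvolutionData K X r))
    (X' : C) (r' : K.A n ⟶ X') (hX' : Nonempty (RightConvolutionData K X' r')) :
    ∃ g : X ≅ X', r ≫ g.hom = r' ∧
      ((∀ i : ℕ, i ≤ n → ∀ m : ℤ, m < 0 → ∀ φ : K.A i ⟶ X⟦m⟧, φ = 0) →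
        ∀ g' : X ⟶ X', r ≫ g' = r' → g' = g.hom) := by
  obtain ⟨D⟩ := hX
  obtain ⟨D'⟩ := hX'
  obtain ⟨e, he⟩ := D.exists_iso_B hvanish D' n le_rfl
  let g : X ≅ X' := eqToIso D.hBn.symm ≪≫ e ≪≫ eqToIso D'.hBn
  have hg : r ≫ g.hom = r' := by
    simp [g, ← D.v_comp_eqToHom, ← D'.v_comp_eqToHom, reassoc_of% he]
  refine ⟨g, hg, fun hXvanish g' hg' => ?_⟩
  have : g' ≫ g.inv - 𝟙 X = 0 := D.eq_zero_of_comp_eq_zero hXvanish <| by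
    rw [Preadditive.comp_sub, reassoc_of% hg', Category.comp_id, ← hg, Category.assoc,
      Iso.hom_inv_id, Category.comp_id, sub_self]
  exact (Iso.comp_inv_eq_id g).1 (sub_eq_zero.1 this)
end

section
/- Let 𝒯 be a pretriangulated category and let (A_•, d_•) be a complex of length n over 𝒯 such that Hom(A_i, A_j⟦m⟧) = 0 for all 0 ≤ i < j ≤ n and all integers m < 0. Then there exists a left convolution (Y, l) of (A_•, d_•), and any two left convolutions are isomorphic via an isomorphism commuting with the structure morphisms l. If moreover Hom(Y, A_j⟦m⟧) = 0 for all 0 ≤ j ≤ n and all m < 0 for some (equivalently, any) left convolution Y, then this isomorphism is unique, so the left convolution is unique up to a unique isomorphism. -/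
/-! Negative Hom-vanishing propagates along a Postnikov system: in the distinguished triangle
`B i → A i → B (i+1) → B i⟦1⟧`, if `X` has no negative Homs to `A i` and `B (i+1)` then it has
none to `B i`. Hence, for `X` with no negative Homs to the `A j` with `j > i`, the map
`t i : B i ⟶ A i` is injective on morphisms out of `X`, its kernel being the image of
`Hom(X, B (i+1)⟦-1⟧) = 0`.

Existence goes by induction on `n`: given a convolution of `A 1 → ⋯ → A n`, the differential
`d 0` lifts along `t 0` (`d 0 ≫ s 0` vanishes, as its composite with the injective `t 1` is
`d 0 ≫ d 1 = 0`), and the cocone of the lift extends the Postnikov system by one step.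
Uniqueness goes by descending induction on the stage: injectivity of `t (i+1)` on maps out of
`A i` makes the isomorphism at stage `i+1` compatible with the `s i`, and the five lemma for
triangles produces the isomorphism at stage `i`. At stage `0` the same injectivity, now for maps
out of `Y`, makes the isomorphism unique. -/

open CategoryTheory CategoryTheory.Limits CategoryTheory.Pretriangulated

universe v u

variable (C : Type u) [Category.{v} C] [Preadditive C] [HasZeroObject C] [HasShift C ℤ]
  [∀ n : ℤ, (shiftFunctor C n).Additive] [Pretriangulated C]

variable {C}

/-- The data exhibiting `(Y, l)` as a left convolution of a complex `(A, d)` of length `n`: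
a Postnikov system `B 0 = Y, B 1, …, B n = A n` with morphisms `t i : B i ⟶ A i`
(with `t 0 = l` and `t n = id`), `s i : A i ⟶ B (i+1)` and `w i : B (i+1) ⟶ (B i)⟦1⟧` such
that `s i ≫ t (i+1) = d i` and each `B i ⟶ A i ⟶ B (i+1) ⟶ (B i)⟦1⟧` is a distinguished
triangle. -/
structure LeftConvolutionData {n : ℕ} (K : ComplexOver C n) (Y : C) (l : Y ⟶ K.A 0) where
  /-- the objects of the Postnikov system -/
  B : ℕ → C
  hB0 : B 0 = Y
  hBn : B n = K.A n
  /-- the morphisms `B i ⟶ A i` -/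
  t : ∀ i : ℕ, B i ⟶ K.A i
  /-- the morphisms `A i ⟶ B (i+1)` -/
  s : ∀ i : ℕ, K.A i ⟶ B (i + 1)
  /-- the morphisms `B (i+1) ⟶ (B i)⟦1⟧` -/
  w : ∀ i : ℕ, B (i + 1) ⟶ (B i)⟦(1 : ℤ)⟧
  ht0 : t 0 = eqToHom hB0 ≫ l
  htn : t n = eqToHom hBn
  comm : ∀ i : ℕ, i + 1 ≤ n → s i ≫ t (i + 1) = K.d i
  mem : ∀ i : ℕ, i + 1 ≤ n → Triangle.mk (t i) (s i) (w i) ∈ distTriang C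

section

variable {C : Type u} [Category.{v} C] [HasZeroMorphisms C] [HasShift C ℤ]

def NegHomsVanish (X Z : C) : Prop :=
  ∀ m : ℤ, m < 0 → ∀ φ : X ⟶ Z⟦m⟧, φ = 0

lemma NegHomsVanish.shift {X Z : C} (h : NegHomsVanish X Z) {a : ℤ} (ha : a ≤ 0) :
    NegHomsVanish X (Z⟦a⟧) := by
  intro m hm φ
  let e := (shiftFunctorAdd C a m).app Z
  simpa using congrArg (· ≫ e.hom) (h (a + m) (by omega) (φ ≫ e.inv))

end

lemma NegHomsVanish.eq_zero_of_comp_mor₁_eq_zero {T : Triangle C} (hT : T ∈ distTriang C)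
    {X : C} (h₃ : NegHomsVanish X T.obj₃) (φ : X ⟶ T.obj₁) (hφ : φ ≫ T.mor₁ = 0) : φ = 0 := by
  obtain ⟨g, rfl⟩ := Triangle.coyoneda_exact₂ _ (inv_rot_of_distTriang _ hT) φ hφ
  rw [h₃ (-1) (by omega) g]
  exact zero_comp

lemma NegHomsVanish.obj₁_of_distTriang {T : Triangle C} (hT : T ∈ distTriang C) {X : C}
    (h₂ : NegHomsVanish X T.obj₂) (h₃ : NegHomsVanish X T.obj₃) : NegHomsVanish X T.obj₁ :=
  fun m hm φ => (h₃.shift hm.le).eq_zero_of_comp_mor₁_eq_zero (T.shift_distinguished hT m) φ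
    (by
      change φ ≫ (m.negOnePow • T.mor₁⟦m⟧') = 0
      rw [Linear.comp_units_smul, h₂ m hm (φ ≫ _), smul_zero])

def ComplexOver.drop {n : ℕ} (K : ComplexOver C (n + 1)) : ComplexOver C n where
  A i := K.A (i + 1)
  d i := K.d (i + 1)
  comp_zero i h := K.comp_zero (i + 1) (by omega)

namespace LeftConvolutionData

variable {n : ℕ} {K : ComplexOver C n} {Y Y' : C} {l : Y ⟶ K.A 0} {l' : Y' ⟶ K.A 0}

instance isIso_t_self (D : LeftConvolutionData K Y l) : IsIso (D.t n) := by
  rw [D.htn]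
  infer_instance

lemma eqToHom_comp_t_zero (D : LeftConvolutionData K Y l) :
    eqToHom D.hB0.symm ≫ D.t 0 = l := by
  simp [D.ht0]

lemma negHomsVanish_B (D : LeftConvolutionData K Y l) {X : C} {i : ℕ} (hi : i ≤ n)
    (hX : ∀ j, i ≤ j → j ≤ n → NegHomsVanish X (K.A j)) : NegHomsVanish X (D.B i) := by
  induction hi using Nat.decreasingInduction with
  | self =>
    rw [D.hBn]
    exact hX n le_rfl le_rfl
  | of_succ i hi ih =>
    exact NegHomsVanish.obj₁_of_distTriang (D.mem i hi) (hX i le_rfl hi.le)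
      (ih fun j hj hjn => hX j (by omega) hjn)

lemma eq_zero_of_comp_t_eq_zero (D : LeftConvolutionData K Y l) {X : C} {i : ℕ} (hi : i ≤ n)
    (hX : ∀ j, i < j → j ≤ n → NegHomsVanish X (K.A j)) (φ : X ⟶ D.B i)
    (hφ : φ ≫ D.t i = 0) : φ = 0 := by
  obtain rfl | hi := hi.eq_or_lt
  · exact (cancel_mono (D.t i)).1 (by rw [hφ, zero_comp])
  · have hB : NegHomsVanish X (D.B (i + 1)) :=
      D.negHomsVanish_B hi fun j hj hjn => hX j (by omega) hjn
    exact hB.eq_zero_of_comp_mor₁_eq_zero (D.mem i hi) φ hφ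

lemma exists_lift (D : LeftConvolutionData K Y l) {X : C} {i : ℕ} (hi : i ≤ n)
    (hX : ∀ j, i + 1 < j → j ≤ n → NegHomsVanish X (K.A j)) (f : X ⟶ K.A i)
    (hf : i < n → f ≫ K.d i = 0) : ∃ g : X ⟶ D.B i, g ≫ D.t i = f := by
  obtain rfl | hi := hi.eq_or_lt
  · exact ⟨f ≫ inv (D.t i), by simp⟩
  · have hfs : f ≫ D.s i = 0 := D.eq_zero_of_comp_t_eq_zero hi hX _ (by
      rw [Category.assoc, D.comm i hi, hf hi])
    obtain ⟨g, hg⟩ := Triangle.coyoneda_exact₂ _ (D.mem i hi) f hfs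
    exact ⟨g, hg.symm⟩

def ofLengthZero (K : ComplexOver C 0) : LeftConvolutionData K (K.A 0) (𝟙 _) where
  B := K.A
  hB0 := rfl
  hBn := rfl
  t _ := 𝟙 _
  s _ := 0
  w _ := 0
  ht0 := by simp
  htn := by simp
  comm i hi := by omega
  mem i hi := by omega

def cons {K : ComplexOver C (n + 1)} {Y₁ : C} {l₁ : Y₁ ⟶ K.drop.A 0}
    (D : LeftConvolutionData K.drop Y₁ l₁) {Z : C} {f : Z ⟶ K.A 0} {g : K.A 0 ⟶ D.B 0}
    {w : D.B 0 ⟶ Z⟦(1 : ℤ)⟧} (hg : g ≫ D.t 0 = K.d 0) (hT : Triangle.mk f g w ∈ distTriang C) :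
    LeftConvolutionData K Z f where
  B | 0 => Z | i + 1 => D.B i
  hB0 := rfl
  hBn := D.hBn
  t | 0 => f | i + 1 => D.t i
  s | 0 => g | i + 1 => D.s i
  w | 0 => w | i + 1 => D.w i
  ht0 := by simp
  htn := D.htn
  comm
    | 0, _ => hg
    | i + 1, hi => D.comm i (by omega)
  mem
    | 0, _ => hT
    | i + 1, hi => D.mem i (by omega)

lemma exists_iso_B (hK : ∀ i j, i < j → j ≤ n → NegHomsVanish (K.A i) (K.A j))
    (D : LeftConvolutionData K Y l) (D' : LeftConvolutionData K Y' l') {i : ℕ} (hi : i ≤ n) :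
    ∃ e : D.B i ≅ D'.B i, e.hom ≫ D'.t i = D.t i := by
  induction hi using Nat.decreasingInduction with
  | self => exact ⟨eqToIso (D.hBn.trans D'.hBn.symm), by simp [D.htn, D'.htn]⟩
  | of_succ i hi ih =>
    obtain ⟨e, he⟩ := ih
    have hs : D.s i ≫ e.hom = 𝟙 _ ≫ D'.s i := by
      rw [Category.id_comp, ← sub_eq_zero]
      refine D'.eq_zero_of_comp_t_eq_zero hi (fun j hj hjn => hK i j (by omega) hjn) _ ?_
      rw [Preadditive.sub_comp, Category.assoc, he, D.comm i hi, D'.comm i hi, sub_self]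
    obtain ⟨a, ha₁, ha₃⟩ : ∃ a : D.B i ⟶ D'.B i,
        D.t i ≫ 𝟙 _ = a ≫ D'.t i ∧ D.w i ≫ a⟦(1 : ℤ)⟧' = e.hom ≫ D'.w i :=
      complete_distinguished_triangle_morphism₁ _ _ (D.mem i hi) (D'.mem i hi) (𝟙 _) e.hom hs
    have : IsIso a := isIso₁_of_isIso₂₃ (T := Triangle.mk (D.t i) (D.s i) (D.w i))
      (T' := Triangle.mk (D'.t i) (D'.s i) (D'.w i))
      (Triangle.homMk _ _ a (𝟙 _) e.hom ha₁ hs ha₃)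
      (D.mem i hi) (D'.mem i hi) (inferInstanceAs (IsIso (𝟙 (K.A i))))
      (inferInstanceAs (IsIso e.hom))
    exact ⟨asIso a, ha₁.symm.trans (Category.comp_id _)⟩

lemma exists_iso (hK : ∀ i j, i < j → j ≤ n → NegHomsVanish (K.A i) (K.A j))
    (D : LeftConvolutionData K Y l) (D' : LeftConvolutionData K Y' l') :
    ∃ e : Y ≅ Y', e.hom ≫ l' = l := by
  obtain ⟨e, he⟩ := exists_iso_B hK D D' (Nat.zero_le n)
  refine ⟨eqToIso D.hB0.symm ≪≫ e ≪≫ eqToIso D'.hB0, ?_⟩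
  simp [← D.eqToHom_comp_t_zero, ← D'.eqToHom_comp_t_zero, ← he]

lemma hom_ext (D' : LeftConvolutionData K Y' l') {X : C}
    (hX : ∀ j, 0 < j → j ≤ n → NegHomsVanish X (K.A j)) {φ ψ : X ⟶ Y'}
    (h : φ ≫ l' = ψ ≫ l') : φ = ψ := by
  have := D'.eq_zero_of_comp_t_eq_zero (Nat.zero_le n) hX ((φ - ψ) ≫ eqToHom D'.hB0.symm)
    (by rw [Category.assoc, D'.eqToHom_comp_t_zero, Preadditive.sub_comp, h, sub_self])
  rwa [Preadditive.IsIso.comp_right_eq_zero, sub_eq_zero] at this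

end LeftConvolutionData

theorem exists_leftConvolutionData : ∀ {n : ℕ} (K : ComplexOver C n),
    (∀ i j, i < j → j ≤ n → NegHomsVanish (K.A i) (K.A j)) →
    ∃ (Y : C) (l : Y ⟶ K.A 0), Nonempty (LeftConvolutionData K Y l)
  | 0, K, _ => ⟨_, _, ⟨.ofLengthZero K⟩⟩
  | n + 1, K, hK => by
    obtain ⟨Y₁, l₁, ⟨D⟩⟩ := exists_leftConvolutionData K.drop
      fun i j hij hj => hK (i + 1) (j + 1) (by omega) (by omega)
    obtain ⟨g, hg⟩ := D.exists_lift (Nat.zero_le n)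
      (fun j _ hj => hK 0 (j + 1) (by omega) (by omega)) (K.d 0)
      fun _ => K.comp_zero 0 (by omega)
    obtain ⟨Z, f, w, hT⟩ := distinguished_cocone_triangle₁ g
    exact ⟨Z, f, ⟨D.cons hg hT⟩⟩

/-- Existence and uniqueness of left convolutions: if `(A, d)` is a complex of length `n`
over a pretriangulated category with `Hom(A i, A j⟦m⟧) = 0` for `i < j ≤ n`, `m < 0`, then a
left convolution `(Y, l)` exists, any two left convolutions are isomorphic via an isomorphism
commuting with the structure morphisms, and this isomorphism is unique whenever
`Hom(Y, A j⟦m⟧) = 0` for all `j ≤ n` and `m < 0`. -/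
theorem leftConvolution_exists_unique {n : ℕ} (K : ComplexOver C n)
    (hvanish : ∀ i j : ℕ, i < j → j ≤ n → ∀ m : ℤ, m < 0 →
      ∀ f : K.A i ⟶ (K.A j)⟦m⟧, f = 0) :
    (∃ (Y : C) (l : Y ⟶ K.A 0), Nonempty (LeftConvolutionData K Y l)) ∧
    (∀ (Y : C) (l : Y ⟶ K.A 0) (Y' : C) (l' : Y' ⟶ K.A 0),
      Nonempty (LeftConvolutionData K Y l) → Nonempty (LeftConvolutionData K Y' l') →
      ∃ e : Y ≅ Y', e.hom ≫ l' = l ∧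
        ((∀ j : ℕ, j ≤ n → ∀ m : ℤ, m < 0 → ∀ φ : Y ⟶ (K.A j)⟦m⟧, φ = 0) →
          ∀ e' : Y ⟶ Y', e' ≫ l' = l → e' = e.hom)) := by
  refine ⟨exists_leftConvolutionData K hvanish, ?_⟩
  rintro Y l Y' l' ⟨D⟩ ⟨D'⟩
  obtain ⟨e, he⟩ := D.exists_iso hvanish D'
  exact ⟨e, he, fun hY e' he' => D'.hom_ext (fun j _ hj => hY j hj) (he'.trans he.symm)⟩
end

section
/- Let 𝒯 be a pretriangulated category and let (A_•, d_•) and (A'_•, d'_•) be complexes of length n over 𝒯 such that Hom(A_i, A_j⟦m⟧) = 0, Hom(A'_i, A'_j⟦m⟧) = 0, and Hom(A_i, A'_j⟦m⟧) = 0 for all 0 ≤ i < j ≤ n and all integers m < 0. Let (f_i : A_i → A'_i)_{0≤i≤n} be a morphism of complexes, i.e. f_{i+1} ∘ d_i = d'_i ∘ f_i for 0 ≤ i ≤ n−1. Then for any left convolution (Y, l) of (A_•, d_•), any left convolution (Y', l') of (A'_•, d'_•), any object Z of 𝒯, and any morphism h : Z → Y, there exists a morphism g : Z → Y' with l' ∘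 g = f_0 ∘ l ∘ h. If moreover Hom(Z, A'_j⟦m⟧) = 0 for all 0 ≤ j ≤ n and all m < 0, then g is the unique morphism Z → Y' satisfying l' ∘ g = f_0 ∘ l ∘ h. -/
open CategoryTheory CategoryTheory.Limits CategoryTheory.Pretriangulated

universe v u

variable (C : Type u) [Category.{v} C] [Preadditive C] [HasZeroObject C] [HasShift C ℤ]
  [∀ n : ℤ, (shiftFunctor C n).Additive] [Pretriangulated C]

variable {C}

/-!
Compare the two Postnikov systems `B ⟶ A ⟶ B[+1]` and `B' ⟶ A' ⟶ B'[+1]` from the top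
down, where `B n = A n` and `B' n = A' n`. Given `g : B (i+1) ⟶ B' (i+1)` over `f (i+1)`, the
two maps `s i ≫ g` and `f i ≫ s' i` agree after `t' (i+1)`, so their difference factors
through `B' (i+2)⟦-1⟧`; since `B' (i+2)` is an iterated extension of `A' (i+2), …, A' n`, the
vanishing of `Hom(A i, A' j⟦m⟧)` for `m < 0` kills it. The morphism axiom of triangulated
categories then extends `g` to `B i ⟶ B' i`. The same argument with `Z` in place of `A i`
shows that composing with `l'` (that is, with `t' 0`) is injective on `Hom(Z, Y')`, which
gives the uniqueness.
-/

lemma eq_zero_of_iso_of_forall_eq_zero {𝒞 : Type*} [Category 𝒞] [HasZeroMorphisms 𝒞]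
    {W X Y : 𝒞} (e : X ≅ Y) (h : ∀ ψ : W ⟶ Y, ψ = 0) (φ : W ⟶ X) : φ = 0 := by
  simpa using h (φ ≫ e.hom) =≫ e.inv

namespace CategoryTheory.Pretriangulated

variable {T : Triangle C} {W : C}

lemma eq_zero_of_comp_mor₁_eq_zero (hT : T ∈ distTriang C)
    (hW : ∀ ψ : W ⟶ T.obj₃⟦(-1 : ℤ)⟧, ψ = 0)
    (φ : W ⟶ T.obj₁) (hφ : φ ≫ T.mor₁ = 0) : φ = 0 := by
  obtain ⟨ψ, rfl⟩ := Triangle.coyoneda_exact₂ _ (inv_rot_of_distTriang _ hT) φ hφ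
  rw [hW ψ]
  exact zero_comp

lemma eq_zero_of_forall_shift_obj₂_of_forall_shift_obj₃ (hT : T ∈ distTriang C) {m : ℤ}
    (h₂ : ∀ ψ : W ⟶ T.obj₂⟦m⟧, ψ = 0) (h₃ : ∀ ψ : W ⟶ T.obj₃⟦m - 1⟧, ψ = 0)
    (φ : W ⟶ T.obj₁⟦m⟧) : φ = 0 := by
  refine eq_zero_of_comp_mor₁_eq_zero (Triangle.shift_distinguished T hT m)
    (eq_zero_of_iso_of_forall_eq_zero
      ((shiftFunctorAdd' C m (-1) (m - 1) (by omega)).app T.obj₃).symm h₃) φ ?_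
  change φ ≫ (m.negOnePow • T.mor₁⟦m⟧') = 0
  rw [Linear.comp_units_smul, h₂ (φ ≫ _), smul_zero]

end CategoryTheory.Pretriangulated

namespace LeftConvolutionData

variable {n : ℕ} {K : ComplexOver C n} {Y : C} {l : Y ⟶ K.A 0} {W : C}

lemma forall_shift_B_eq_zero (D : LeftConvolutionData K Y l) {j : ℕ} (hj : j ≤ n)
    (hW : ∀ i : ℕ, j ≤ i → i ≤ n → ∀ m : ℤ, m < 0 → ∀ φ : W ⟶ (K.A i)⟦m⟧, φ = 0) :
    ∀ m : ℤ, m < 0 → ∀ φ : W ⟶ (D.B j)⟦m⟧, φ = 0 := by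
  induction hj using Nat.decreasingInduction with
  | self =>
    intro m hm
    exact eq_zero_of_iso_of_forall_eq_zero ((shiftFunctor C m).mapIso (eqToIso D.hBn))
      (hW n le_rfl le_rfl m hm)
  | of_succ j hj ih =>
    intro m hm
    exact eq_zero_of_forall_shift_obj₂_of_forall_shift_obj₃ (D.mem j hj)
      (hW j le_rfl hj.le m hm) (ih (fun i hi => hW i (by omega)) (m - 1) (by omega))

lemma hom_ext_B (D : LeftConvolutionData K Y l) {j : ℕ} (hj : j ≤ n)
    (hW : ∀ i : ℕ, j < i → i ≤ n → ∀ m : ℤ, m < 0 → ∀ φ : W ⟶ (K.A i)⟦m⟧, φ = 0)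
    {φ ψ : W ⟶ D.B j} (h : φ ≫ D.t j = ψ ≫ D.t j) : φ = ψ := by
  rw [← sub_eq_zero]
  rw [← sub_eq_zero, ← Preadditive.sub_comp] at h
  rcases hj.lt_or_eq with hj | rfl
  · exact eq_zero_of_comp_mor₁_eq_zero (D.mem j hj)
      (D.forall_shift_B_eq_zero hj (fun i hi => hW i (by omega)) (-1) (by omega)) _ h
  · have : IsIso (D.t j) := by rw [D.htn]; infer_instance
    simpa using h =≫ inv (D.t j)

lemma hom_ext_s6 (D : LeftConvolutionData K Y l) {Z : C}
    (hZ : ∀ j : ℕ, j ≤ n → ∀ m : ℤ, m < 0 → ∀ φ : Z ⟶ (K.A j)⟦m⟧, φ = 0)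
    {g₁ g₂ : Z ⟶ Y} (h : g₁ ≫ l = g₂ ≫ l) : g₁ = g₂ := by
  have := D.hom_ext_B (Nat.zero_le n) (fun j _ => hZ j) (φ := g₁ ≫ eqToHom D.hB0.symm)
    (ψ := g₂ ≫ eqToHom D.hB0.symm) (by simpa [D.ht0] using h)
  simpa using this =≫ eqToHom D.hB0

variable {K' : ComplexOver C n} {Y' : C} {l' : Y' ⟶ K'.A 0}

lemma exists_hom_B_comp_t (D : LeftConvolutionData K Y l) (D' : LeftConvolutionData K' Y' l')
    (hKK' : ∀ i j : ℕ, i < j → j ≤ n → ∀ m : ℤ, m < 0 → ∀ φ : K.A i ⟶ (K'.A j)⟦m⟧, φ = 0)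
    (f : ∀ i : ℕ, K.A i ⟶ K'.A i) (hf : ∀ i : ℕ, i + 1 ≤ n → K.d i ≫ f (i + 1) = f i ≫ K'.d i)
    {i : ℕ} (hi : i ≤ n) :
    ∃ g : D.B i ⟶ D'.B i, g ≫ D'.t i = D.t i ≫ f i := by
  induction hi using Nat.decreasingInduction with
  | self => exact ⟨eqToHom D.hBn ≫ f n ≫ eqToHom D'.hBn.symm, by simp [D.htn, D'.htn]⟩
  | of_succ i hi ih =>
    obtain ⟨g, hg⟩ := ih
    have hs : D.s i ≫ g = f i ≫ D'.s i := D'.hom_ext_B hi (fun j hj => hKK' i j (by omega)) (by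
      rw [Category.assoc, Category.assoc, hg, ← Category.assoc, D.comm i hi, hf i hi,
        D'.comm i hi])
    obtain ⟨a, ha, -⟩ := complete_distinguished_triangle_morphism₁ _ _ (D.mem i hi)
      (D'.mem i hi) (f i) g hs
    exact ⟨a, ha.symm⟩

lemma exists_hom_comp_eq (D : LeftConvolutionData K Y l) (D' : LeftConvolutionData K' Y' l')
    (hKK' : ∀ i j : ℕ, i < j → j ≤ n → ∀ m : ℤ, m < 0 → ∀ φ : K.A i ⟶ (K'.A j)⟦m⟧, φ = 0)
    (f : ∀ i : ℕ, K.A i ⟶ K'.A i) (hf : ∀ i : ℕ, i + 1 ≤ n → K.d i ≫ f (i + 1) = f i ≫ K'.d i) :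
    ∃ g : Y ⟶ Y', g ≫ l' = l ≫ f 0 := by
  obtain ⟨g, hg⟩ := D.exists_hom_B_comp_t D' hKK' f hf (Nat.zero_le n)
  refine ⟨eqToHom D.hB0.symm ≫ g ≫ eqToHom D'.hB0, ?_⟩
  simpa [D.ht0, D'.ht0] using eqToHom D.hB0.symm ≫= hg

end LeftConvolutionData

theorem exists_hom_of_leftConvolutions_general {n : ℕ} (K K' : ComplexOver C n)
    (hKK' : ∀ i j : ℕ, i < j → j ≤ n → ∀ m : ℤ, m < 0 → ∀ f : K.A i ⟶ (K'.A j)⟦m⟧, f = 0)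
    (f : ∀ i : ℕ, K.A i ⟶ K'.A i)
    (hf : ∀ i : ℕ, i + 1 ≤ n → K.d i ≫ f (i + 1) = f i ≫ K'.d i)
    (Y : C) (l : Y ⟶ K.A 0) (hY : Nonempty (LeftConvolutionData K Y l))
    (Y' : C) (l' : Y' ⟶ K'.A 0) (hY' : Nonempty (LeftConvolutionData K' Y' l'))
    (Z : C) (h : Z ⟶ Y) :
    ∃ g : Z ⟶ Y', g ≫ l' = h ≫ l ≫ f 0 ∧
      ((∀ j : ℕ, j ≤ n → ∀ m : ℤ, m < 0 → ∀ φ : Z ⟶ (K'.A j)⟦m⟧, φ = 0) →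
        ∀ g' : Z ⟶ Y', g' ≫ l' = h ≫ l ≫ f 0 → g' = g) := by
  obtain ⟨D⟩ := hY
  obtain ⟨D'⟩ := hY'
  obtain ⟨g, hg⟩ := D.exists_hom_comp_eq D' hKK' f hf
  refine ⟨h ≫ g, by rw [Category.assoc, hg], fun hZ g' hg' => D'.hom_ext_s6 hZ ?_⟩
  rw [hg', Category.assoc, hg]

/-- Orlov's lemma on morphisms of left convolutions: given complexes `(A, d)` and `(A', d')`
of length `n` with the appropriate negative-degree Hom-vanishing, a morphism of complexes
`(f i)`, left convolutions `(Y, l)` and `(Y', l')`, and a morphism `h : Z ⟶ Y`, there exists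
`g : Z ⟶ Y'` with `l' ∘ g = f 0 ∘ l ∘ h`; moreover `g` is unique with this property whenever
`Hom(Z, A' j⟦m⟧) = 0` for all `j ≤ n` and `m < 0`. -/
theorem exists_hom_of_leftConvolutions {n : ℕ} (K K' : ComplexOver C n)
    (hK : ∀ i j : ℕ, i < j → j ≤ n → ∀ m : ℤ, m < 0 → ∀ f : K.A i ⟶ (K.A j)⟦m⟧, f = 0)
    (hK' : ∀ i j : ℕ, i < j → j ≤ n → ∀ m : ℤ, m < 0 → ∀ f : K'.A i ⟶ (K'.A j)⟦m⟧, f = 0)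
    (hKK' : ∀ i j : ℕ, i < j → j ≤ n → ∀ m : ℤ, m < 0 → ∀ f : K.A i ⟶ (K'.A j)⟦m⟧, f = 0)
    (f : ∀ i : ℕ, K.A i ⟶ K'.A i)
    (hf : ∀ i : ℕ, i + 1 ≤ n → K.d i ≫ f (i + 1) = f i ≫ K'.d i)
    (Y : C) (l : Y ⟶ K.A 0) (hY : Nonempty (LeftConvolutionData K Y l))
    (Y' : C) (l' : Y' ⟶ K'.A 0) (hY' : Nonempty (LeftConvolutionData K' Y' l'))
    (Z : C) (h : Z ⟶ Y) :
    ∃ g : Z ⟶ Y', g ≫ l' = h ≫ l ≫ f 0 ∧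
      ((∀ j : ℕ, j ≤ n → ∀ m : ℤ, m < 0 → ∀ φ : Z ⟶ (K'.A j)⟦m⟧, φ = 0) →
        ∀ g' : Z ⟶ Y', g' ≫ l' = h ≫ l ≫ f 0 → g' = g) :=
  exists_hom_of_leftConvolutions_general K K' hKK' f hf Y l hY Y' l' hY' Z h
end

section
/- Let 𝒯 and 𝒮 be pretriangulated categories and let F : 𝒯 → 𝒮 be an exact functor admitting both a left adjoint and a right adjoint. Let (S_i)_{i∈I} be a spanning class for 𝒯. If for all i, j ∈ I and all k ∈ ℤ the map Hom(S_i, S_j⟦k⟧) → Hom(F(S_i), F(S_j)⟦k⟧) induced by F (using the isomorphism F(S_j⟦k⟧) ≅ F(S_j)⟦k⟧ coming from the shift compatibility of F) is bijective, then F is fully faithful. -/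
open CategoryTheory CategoryTheory.Limits CategoryTheory.Pretriangulated

universe v v' u u' w

/-! Write `ε_A : Gl (F A) ⟶ A` for the counit. Since `F.map` on `Hom(A, B)` is `ε_A ≫ -` up to the
adjunction bijection, the hypothesis says that `ε_{Sp i} ≫ -` is bijective on maps into every
`(Sp j)⟦m⟧`; by the long exact Hom sequence the cone of `ε_{Sp i}` then has no nonzero maps to the
spanning class, so it vanishes and `ε_{Sp i}` is an isomorphism. Hence `F` is bijective on
`Hom((Sp i)⟦k⟧, B)` for every `B`, and the dual argument shows that the unit `B ⟶ Gr (F B)` is an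
isomorphism, which makes `F` fully faithful. -/

namespace CategoryTheory

variable {C : Type u} {D : Type u'} [Category.{v} C] [Category.{v'} D]

lemma Functor.map_bijective_iff_of_iso (F : C ⥤ D) {X Y X' Y' : C} (α : X ≅ X') (β : Y ≅ Y') :
    Function.Bijective (F.map : (X ⟶ Y) → _) ↔ Function.Bijective (F.map : (X' ⟶ Y') → _) := by
  rw [← Function.Bijective.of_comp_iff _ (α.homCongr β).bijective,
    ← Function.Bijective.of_comp_iff' ((F.mapIso α).homCongr (F.mapIso β)).bijective]
  congr!
  ext f
  simp

lemma Functor.map_bijective_shift_iff {A : Type*} [AddGroup A] [HasShift C A] [HasShift D A]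
    (F : C ⥤ D) [F.CommShift A] (a : A) (X Y : C) :
    Function.Bijective (F.map : (X⟦a⟧ ⟶ Y⟦a⟧) → _) ↔ Function.Bijective (F.map : (X ⟶ Y) → _) := by
  have hcomm : F.map ∘ (shiftFunctor C a).map = ((F.commShiftIso a).app X).symm.homCongr
      ((F.commShiftIso a).app Y).symm ∘ (shiftFunctor D a).map ∘ F.map := by
    funext f
    simp
  rw [← Function.Bijective.of_comp_iff _
      ((Functor.FullyFaithful.ofFullyFaithful (shiftFunctor C a)).map_bijective X Y), hcomm,
    Equiv.comp_bijective, Function.Bijective.of_comp_iff'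
      ((Functor.FullyFaithful.ofFullyFaithful (shiftFunctor D a)).map_bijective _ _)]

lemma Adjunction.map_bijective_iff_counit_comp {G : D ⥤ C} {F : C ⥤ D} (adj : G ⊣ F) (A B : C) :
    Function.Bijective (F.map : (A ⟶ B) → _) ↔
      Function.Bijective (fun f : A ⟶ B => adj.counit.app A ≫ f) := by
  rw [← Function.Bijective.of_comp_iff' (adj.homEquiv _ _).symm.bijective]
  congr!
  ext f
  simp [Adjunction.homEquiv_counit]

lemma Adjunction.map_bijective_iff_comp_unit {F : C ⥤ D} {G : D ⥤ C} (adj : F ⊣ G) (X A : C) :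
    Function.Bijective (F.map : (X ⟶ A) → _) ↔
      Function.Bijective (fun f : X ⟶ A => f ≫ adj.unit.app A) := by
  rw [← Function.Bijective.of_comp_iff' (adj.homEquiv _ _).bijective]
  congr!
  simp [Adjunction.homEquiv_unit]

end CategoryTheory

namespace CategoryTheory.Pretriangulated

variable {C : Type u} [Category.{v} C] [Preadditive C] [HasZeroObject C] [HasShift C ℤ]
  [∀ n : ℤ, (shiftFunctor C n).Additive] [Pretriangulated C] {I : Type w} (Sp : I → C)

lemma isIso_of_bijective_precomp
    (hspan : ∀ A : C, (∀ (i : I) (j : ℤ) (g : A ⟶ (Sp i)⟦j⟧), g = 0) → IsZero A)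
    {X Y : C} (f : X ⟶ Y)
    (hf : ∀ i (j : ℤ), Function.Bijective (fun g : Y ⟶ (Sp i)⟦j⟧ => f ≫ g)) :
    IsIso f := by
  obtain ⟨Z, g, h, hT⟩ := distinguished_cocone_triangle f
  have hfg : f ≫ g = 0 := comp_distTriang_mor_zero₁₂ _ hT
  have hhf : h ≫ f⟦1⟧' = 0 := comp_distTriang_mor_zero₃₁ _ hT
  refine (Triangle.isZero₃_iff_isIso₁ _ hT).1 (hspan Z fun i j φ => ?_)
  have hgφ : g ≫ φ = 0 := (hf i j).injective (by simp [← Category.assoc, hfg])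
  obtain ⟨u, rfl⟩ : ∃ u : X⟦(1 : ℤ)⟧ ⟶ (Sp i)⟦j⟧, φ = h ≫ u :=
    Triangle.yoneda_exact₃ _ hT φ hgφ
  -- `u` factors through `f⟦1⟧`, by surjectivity of `f ≫ -` onto maps into `(Sp i)⟦j - 1⟧`.
  let e := (shiftFunctorAdd' C (j - 1) 1 j (by omega)).app (Sp i)
  obtain ⟨w, hw : f ≫ w = _⟩ := (hf i (j - 1)).2 ((shiftFunctor C (1 : ℤ)).preimage (u ≫ e.hom))
  have hu : u = f⟦1⟧' ≫ w⟦1⟧' ≫ e.inv := by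
    rw [← Functor.map_comp_assoc, hw, Functor.map_preimage, Category.assoc, e.hom_inv_id,
      Category.comp_id]
  simp [hu, reassoc_of% hhf]

lemma isIso_of_bijective_postcomp
    (hspan : ∀ A : C, (∀ (i : I) (j : ℤ) (g : (Sp i)⟦j⟧ ⟶ A), g = 0) → IsZero A)
    {X Y : C} (f : X ⟶ Y)
    (hf : ∀ i (j : ℤ), Function.Bijective (fun g : (Sp i)⟦j⟧ ⟶ X => g ≫ f)) :
    IsIso f := by
  obtain ⟨Z, g, h, hT⟩ := distinguished_cocone_triangle f
  have hfg : f ≫ g = 0 := comp_distTriang_mor_zero₁₂ _ hT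
  have hhf : h ≫ f⟦1⟧' = 0 := comp_distTriang_mor_zero₃₁ _ hT
  refine (Triangle.isZero₃_iff_isIso₁ _ hT).1 (hspan Z fun i j φ => ?_)
  have hφh : φ ≫ h = 0 := by
    let e := (shiftFunctorAdd' C (j - 1) 1 j (by omega)).app (Sp i)
    let w := (shiftFunctor C (1 : ℤ)).preimage (e.inv ≫ φ ≫ h)
    have hwf : w ≫ f = 0 := (shiftFunctor C (1 : ℤ)).map_injective (by simp [w, hhf])
    have hw : w = 0 := (hf i (j - 1)).injective (by simpa using hwf)
    simpa [w] using congrArg (fun w => e.hom ≫ w⟦1⟧') hw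
  obtain ⟨v, rfl⟩ : ∃ v : (Sp i)⟦j⟧ ⟶ Y, φ = v ≫ g := Triangle.coyoneda_exact₃ _ hT φ hφh
  obtain ⟨w, rfl⟩ := (hf i j).2 v
  simp [hfg]

end CategoryTheory.Pretriangulated

/-- Let `F : 𝒯 ⥤ 𝒮` be an exact functor between pretriangulated categories admitting both a
left adjoint and a right adjoint, and let `(S i)` be a spanning class for `𝒯`.  If `F`
induces bijections `Hom(S i, S j⟦k⟧) ≃ Hom(F (S i), F (S j)⟦k⟧)` for all `i, j, k`, then
`F` is fully faithful. -/
theorem fullyFaithful_of_bijective_on_spanning_class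
    {T : Type u} {S : Type u'} [Category.{v} T] [Category.{v'} S]
    [Preadditive T] [HasZeroObject T] [HasShift T ℤ]
    [∀ n : ℤ, (shiftFunctor T n).Additive] [Pretriangulated T]
    [Preadditive S] [HasZeroObject S] [HasShift S ℤ]
    [∀ n : ℤ, (shiftFunctor S n).Additive] [Pretriangulated S]
    (F : T ⥤ S) [F.CommShift ℤ] [F.IsTriangulated]
    (Gl : S ⥤ T) (adjl : Gl ⊣ F) (Gr : S ⥤ T) (adjr : F ⊣ Gr)
    {I : Type w} (Sp : I → T)
    (hspan₁ : ∀ A : T, (∀ (i : I) (j : ℤ) (f : (Sp i)⟦j⟧ ⟶ A), f = 0) → IsZero A)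
    (hspan₂ : ∀ A : T, (∀ (i : I) (j : ℤ) (f : A ⟶ (Sp i)⟦j⟧), f = 0) → IsZero A)
    (hbij : ∀ (i j : I) (m : ℤ),
      Function.Bijective (fun f : Sp i ⟶ (Sp j)⟦m⟧ =>
        F.map f ≫ (F.commShiftIso m).hom.app (Sp j))) :
    F.Full ∧ F.Faithful := by
  have hSp (i j : I) (m : ℤ) : Function.Bijective (F.map : (Sp i ⟶ (Sp j)⟦m⟧) → _) :=
    (Function.Bijective.of_comp_iff'
      ((F.commShiftIso m).app (Sp j)).homToEquiv.bijective _).1 (hbij i j m)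
  have hcounit (i : I) : IsIso (adjl.counit.app (Sp i)) :=
    isIso_of_bijective_precomp Sp hspan₂ _ fun j m =>
      (adjl.map_bijective_iff_counit_comp _ _).1 (hSp i j m)
  have hmap (i : I) (k : ℤ) (B : T) : Function.Bijective (F.map : ((Sp i)⟦k⟧ ⟶ B) → _) := by
    refine (F.map_bijective_iff_of_iso (Iso.refl _)
      ((shiftFunctorCompIsoId T (-k) k (by omega)).app B)).1 ?_
    change Function.Bijective (F.map : ((Sp i)⟦k⟧ ⟶ (B⟦-k⟧)⟦k⟧) → _)
    rw [F.map_bijective_shift_iff, adjl.map_bijective_iff_counit_comp]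
    exact (asIso (adjl.counit.app (Sp i))).symm.homFromEquiv.bijective
  have hunit (B : T) : IsIso (adjr.unit.app B) :=
    isIso_of_bijective_postcomp Sp hspan₁ _ fun i k =>
      (adjr.map_bijective_iff_comp_unit _ _).1 (hmap i k B)
  have := NatIso.isIso_of_isIso_app adjr.unit
  exact ⟨adjr.fullyFaithfulLOfIsIsoUnit.full, adjr.fullyFaithfulLOfIsIsoUnit.faithful⟩
end
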